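/- On the closed triangle Δ = {(x,y) ∈ ℝ² : x ≥ 0, y ≥ 0, x + y ≤ 1}, the function f(x,y) = −2Λ(π(x+y)) + 2Λ(πy) + Λ(πx) satisfies f(x,y) ≤ 4Λ(π/4), with equality if and only if (x,y) = (1/2, 1/4). In particular f has a unique maximum point on Δ, located at (1/2, 1/4). -/

import Mathlib

/-!
Three properties of `Λ` carry the argument: the reflection `Λ (π - θ) = -Λ θ`, the duplication
formula `Λ (2θ) = 2 Λ θ - 2 Λ (π/2 - θ)` (from `2 sin 2t = (2 sin t) (2 cos t)` and
`Λ (π/2) = 0`), and the midpoint inequality `Λ p + Λ q ≤ 2 Λ ((p + q)/2)` for `p, q ≥ 0`,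
`p + q ≤ π`, strict when `p ≠ q` and `p + q < π`: for `m < π/2` the derivative of
`s ↦ Λ (m - s) + Λ (m + s)` is `log (sin (m - s) / sin (m + s)) < 0`.

With `a = π(1 - x - y)`, `b = πy`, `u = πx/2`, reflection and duplication rewrite `f` as
`2 (Λ a + Λ b) + 2 (Λ u - Λ (π/2 - u))`. Since `(a + b)/2 = π/2 - u`, the midpoint inequality
bounds this by `2 (Λ u + Λ (π/2 - u))`, and once more by `4 Λ (π/4)`. Equality forces first
`u = π/2 - u`, i.e. `x = 1/2`, and then `a = b`, i.e. `y = 1/4`.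
-/

open Real

/-- The Lobachevsky function `Λ(θ) = -∫₀^θ log|2 sin t| dt`. -/
noncomputable def Lob (θ : ℝ) : ℝ :=
  -∫ t in (0:ℝ)..θ, Real.log |2 * Real.sin t|

open MeasureTheory intervalIntegral Set Filter

lemma intervalIntegrable_log_abs_two_mul_sin (a b : ℝ) :
    IntervalIntegrable (fun t => log |2 * sin t|) volume a b := by
  simp only [log_abs]
  exact (analyticOnNhd_const.mul analyticOnNhd_sin).meromorphicOn.intervalIntegrable_log

lemma ae_sin_ne_zero : ∀ᵐ t : ℝ, sin t ≠ 0 := by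
  refine measure_mono_null (fun t ht => ?_)
    ((countable_range fun n : ℤ => n * π).measure_zero volume)
  exact sin_eq_zero_iff.mp (not_not.mp ht)

lemma ae_cos_ne_zero : ∀ᵐ t : ℝ, cos t ≠ 0 := by
  refine measure_mono_null (fun t ht => ?_)
    ((countable_range fun n : ℤ => (2 * n + 1) * π / 2).measure_zero volume)
  obtain ⟨n, rfl⟩ := cos_eq_zero_iff.mp (not_not.mp ht)
  exact ⟨n, rfl⟩

@[fun_prop]
lemma continuous_lob : Continuous Lob :=
  (continuous_primitive (fun _ _ => intervalIntegrable_log_abs_two_mul_sin _ _) 0).neg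

lemma hasDerivAt_lob {θ : ℝ} (hθ : sin θ ≠ 0) : HasDerivAt Lob (-log |2 * sin θ|) θ := by
  refine (integral_hasDerivAt_right (intervalIntegrable_log_abs_two_mul_sin 0 θ)
    (Measurable.stronglyMeasurable (by measurability)).stronglyMeasurableAtFilter ?_).neg
  exact ((continuous_const.mul continuous_sin).abs.continuousAt).log (by simpa using hθ)

lemma lob_sub_lob (a b : ℝ) : Lob b - Lob a = -∫ t in a..b, log |2 * sin t| := by
  rw [Lob, Lob, ← integral_interval_sub_left (intervalIntegrable_log_abs_two_mul_sin 0 b)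
    (intervalIntegrable_log_abs_two_mul_sin 0 a)]
  ring

lemma lob_pi_div_two : Lob (π / 2) = 0 := by
  have h : ∫ t in (0:ℝ)..π / 2, log |2 * sin t| =
      ∫ t in (0:ℝ)..π / 2, (log 2 + log (sin t)) := by
    refine integral_congr_ae (ae_sin_ne_zero.mono fun t ht _ => ?_)
    rw [abs_mul, log_mul (by norm_num) (by simpa using ht)]
    simp only [log_abs]
  have hsin : IntervalIntegrable (fun t => log (sin t)) volume 0 (π / 2) :=
    intervalIntegrable_log_sin
  rw [Lob, h, intervalIntegral.integral_add intervalIntegrable_const hsin,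
    integral_log_sin_zero_pi_div_two]
  simp only [intervalIntegral.integral_const, sub_zero, smul_eq_mul]
  ring

lemma lob_two_mul (θ : ℝ) : Lob (2 * θ) = 2 * Lob θ - 2 * Lob (π / 2 - θ) := by
  have hscale : ∫ t in (0:ℝ)..2 * θ, log |2 * sin t| =
      2 * ∫ t in (0:ℝ)..θ, log |2 * sin (2 * t)| := by
    simpa using
      (mul_integral_comp_mul_left (a := 0) (b := θ) (f := fun t => log |2 * sin t|) 2).symm
  have hdup : ∫ t in (0:ℝ)..θ, log |2 * sin (2 * t)| =
      ∫ t in (0:ℝ)..θ, (log |2 * sin t| + log |2 * sin (π / 2 - t)|) := by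
    refine integral_congr_ae ((ae_sin_ne_zero.and ae_cos_ne_zero).mono fun t ht _ => ?_)
    rw [sin_pi_div_two_sub, ← log_mul (by simpa using ht.1) (by simpa using ht.2), ← abs_mul,
      sin_two_mul]
    ring_nf
  have hint : IntervalIntegrable (fun t => log |2 * sin (π / 2 - t)|) volume 0 θ := by
    simpa using
      (intervalIntegrable_log_abs_two_mul_sin (π / 2) (π / 2 - θ)).comp_sub_left (π / 2)
  have hshift : ∫ t in (0:ℝ)..θ, log |2 * sin (π / 2 - t)| =
      ∫ t in (π / 2 - θ)..π / 2, log |2 * sin t| := by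
    simpa using integral_comp_sub_left (fun t => log |2 * sin t|) (a := 0) (b := θ) (π / 2)
  have h := lob_sub_lob (π / 2 - θ) (π / 2)
  rw [lob_pi_div_two, ← hshift] at h
  rw [Lob, hscale, hdup,
    intervalIntegral.integral_add (intervalIntegrable_log_abs_two_mul_sin 0 θ) hint, Lob]
  linarith

lemma lob_pi : Lob π = 0 := by
  have h := lob_two_mul (π / 2)
  have h0 : Lob 0 = 0 := by simp [Lob]
  rwa [mul_div_cancel₀ π two_ne_zero, sub_self, lob_pi_div_two, h0, mul_zero, sub_zero] at h

lemma lob_pi_sub (θ : ℝ) : Lob (π - θ) = -Lob θ := by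
  have h := integral_comp_sub_left (fun t => log |2 * sin t|) (a := θ) (b := π) π
  simp only [sin_pi_sub, sub_self] at h
  rw [← zero_sub, ← lob_pi, lob_sub_lob, h, Lob]

lemma lob_add_lob_lt_of_lt {p q : ℝ} (hp : 0 ≤ p) (hpq : p < q) (hsum : p + q < π) :
    Lob p + Lob q < 2 * Lob ((p + q) / 2) := by
  set m := (p + q) / 2
  set d := (q - p) / 2
  have hp' : m - d = p := by ring
  have hq' : m + d = q := by ring
  have hd : 0 < d := by linarith
  have hm : m < π / 2 := by linarith
  set φ : ℝ → ℝ := fun s => Lob (m - s) + Lob (m + s)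
  have hanti : StrictAntiOn φ (Icc 0 d) := by
    refine strictAntiOn_of_deriv_neg (convex_Icc 0 d) (by fun_prop) fun s hs => ?_
    rw [interior_Icc] at hs
    obtain ⟨hs0, hsd⟩ := hs
    have hlo : 0 < sin (m - s) := sin_pos_of_pos_of_lt_pi (by linarith) (by linarith)
    -- `sin (m + s) - sin (m - s) = 2 cos m sin s`
    have hhi : sin (m - s) < sin (m + s) := by
      have hcos : 0 < cos m := cos_pos_of_mem_Ioo ⟨by linarith, hm⟩
      have hsin : 0 < sin s := sin_pos_of_pos_of_lt_pi hs0 (by linarith)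
      nlinarith [mul_pos hcos hsin, sin_add m s, sin_sub m s]
    have hφ : HasDerivAt φ (log |2 * sin (m - s)| - log |2 * sin (m + s)|) s := by
      have h₁ := (hasDerivAt_lob hlo.ne').comp s ((hasDerivAt_id s).const_sub m)
      have h₂ := (hasDerivAt_lob (hlo.trans hhi).ne').comp s ((hasDerivAt_id s).const_add m)
      exact (h₁.add h₂).congr_deriv (by ring)
    rw [hφ.deriv, sub_neg, abs_of_pos (by linarith), abs_of_pos (by linarith)]
    exact log_lt_log (by linarith) (by linarith)
  have h := hanti (left_mem_Icc.2 hd.le) (right_mem_Icc.2 hd.le) hd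
  simp only [φ, sub_zero, add_zero, hp', hq'] at h
  linarith

lemma lob_add_lob_lt {p q : ℝ} (hp : 0 ≤ p) (hq : 0 ≤ q) (hsum : p + q < π) (hpq : p ≠ q) :
    Lob p + Lob q < 2 * Lob ((p + q) / 2) := by
  rcases hpq.lt_or_gt with h | h
  · exact lob_add_lob_lt_of_lt hp h hsum
  · rw [add_comm (Lob p), add_comm p]
    exact lob_add_lob_lt_of_lt hq h (by linarith)

lemma lob_add_lob_le {p q : ℝ} (hp : 0 ≤ p) (hq : 0 ≤ q) (hsum : p + q ≤ π) :
    Lob p + Lob q ≤ 2 * Lob ((p + q) / 2) := by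
  rcases eq_or_ne p q with rfl | hpq
  · rw [add_self_div_two, two_mul]
  rcases hsum.lt_or_eq with hsum | hsum
  · exact (lob_add_lob_lt hp hq hsum hpq).le
  · rw [hsum, lob_pi_div_two, show q = π - p by linarith, lob_pi_sub]
    simp

lemma eq_of_lob_add_lob_eq {p q : ℝ} (hp : 0 ≤ p) (hq : 0 ≤ q) (hsum : p + q < π)
    (h : Lob p + Lob q = 2 * Lob ((p + q) / 2)) : p = q := by
  by_contra hpq
  exact (lob_add_lob_lt hp hq hsum hpq).ne h

theorem stmt_2 (x y : ℝ) (hx : 0 ≤ x) (hy : 0 ≤ y) (hxy : x + y ≤ 1) :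
    (-2 * Lob (π*(x+y)) + 2 * Lob (π*y) + Lob (π*x) ≤ 4 * Lob (π/4)) ∧
    (-2 * Lob (π*(x+y)) + 2 * Lob (π*y) + Lob (π*x) = 4 * Lob (π/4) ↔
      x = 1/2 ∧ y = 1/4) := by
  have hπ := pi_pos
  set a := π * (1 - x - y)
  set b := π * y
  set u := π * x / 2
  have hf : -2 * Lob (π * (x + y)) + 2 * Lob (π * y) + Lob (π * x)
      = 2 * (Lob a + Lob b) + 2 * (Lob u - Lob (π / 2 - u)) := by
    rw [show π * (x + y) = π - a by ring, lob_pi_sub, show π * x = 2 * u by ring, lob_two_mul]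
    ring
  have hab : (a + b) / 2 = π / 2 - u := by ring
  have hu : (u + (π / 2 - u)) / 2 = π / 4 := by ring
  have ha : 0 ≤ a := mul_nonneg hπ.le (by linarith)
  have hb : 0 ≤ b := by positivity
  have hu0 : 0 ≤ u := by positivity
  have hu1 : 0 ≤ π / 2 - u := by nlinarith
  have h₁ : Lob a + Lob b ≤ 2 * Lob (π / 2 - u) := hab ▸ lob_add_lob_le ha hb (by nlinarith)
  have h₂ : Lob u + Lob (π / 2 - u) ≤ 2 * Lob (π / 4) :=
    hu ▸ lob_add_lob_le hu0 hu1 (by linarith)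
  rw [hf]
  refine ⟨by linarith, fun heq => ?_, fun ⟨hx₀, hy₀⟩ => ?_⟩
  · have hx' : x = 1 / 2 := by
      have := eq_of_lob_add_lob_eq hu0 hu1 (by linarith) (by rw [hu]; linarith)
      nlinarith
    have hab' : a = b := eq_of_lob_add_lob_eq ha hb (by nlinarith) (by rw [hab]; linarith)
    refine ⟨hx', ?_⟩
    nlinarith
  · have ha' : a = π / 4 := by simp only [a]; rw [hx₀, hy₀]; ring
    have hb' : b = π / 4 := by simp only [b]; rw [hy₀]; ring
    have hu' : u = π / 4 := by simp only [u]; rw [hx₀]; ring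
    rw [ha', hb', hu', show π / 2 - π / 4 = π / 4 by ring]
    ring
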